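/- Let d ≥ 2 and σ > 0, and let f_σ : ℝ → ℝ be f_σ(x) = ∑_{n=0}^∞ ((-1)ⁿ √π Γ((2n+d)/2) / (2ⁿ σ^{2n} n! Γ(d/2) Γ((2n+1)/2))) x^{2n}, i.e., f_σ(x) = ₁F₁(d/2; 1/2; -x²/(2σ²)). Then for all x, y ∈ ℝ^d, ∫_{S^{d-1}} f_σ(⟨ξ, x - y⟩) dU(ξ) = exp(-‖x - y‖² / (2σ²)), where U is the uniform (normalized rotation-invariant) probability measure on the unit sphere S^{d-1} ⊆ ℝ^d. That is, the d-dimensional Gaussian kernel is the sliced version of the one-dimensional kernel k(s,t) = f_σ(|s-t|). -/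

import Mathlib

open MeasureTheory Metric
open scoped RealInnerProductSpace

/-- The uniform (normalized rotation-invariant) probability measure on the unit sphere
`S^{d-1} ⊆ ℝ^d`, obtained by normalizing the surface measure. -/
noncomputable def uniformSphere (d : ℕ) :
    Measure (sphere (0 : EuclideanSpace ℝ (Fin d)) 1) :=
  ((volume : Measure (EuclideanSpace ℝ (Fin d))).toSphere Set.univ)⁻¹ •
    (volume : Measure (EuclideanSpace ℝ (Fin d))).toSphere

/-!
Expanding `f_σ` in its power series and integrating term by term, everything reduces to the
even moments `∫ ⟪ξ, z⟫ ^ (2n) dU = Γ(n + 1/2) Γ(d/2) / (Γ(1/2) Γ(n + d/2)) ‖z‖ ^ (2n)`, which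
cancel the Gamma factors of the coefficients of `f_σ` and leave the exponential series of
`-‖z‖² / (2σ²)`. The moments come from computing `∫_{ℝ^d} ⟪w, u⟫ ^ m e^{-‖w‖²} dw` twice: in an
orthonormal basis starting with the unit vector `u`, where it factors into one-dimensional
Gaussian integrals, and in polar coordinates, where it is the sphere moment times a Gamma value.
-/

open Set Real

theorem integral_Ioi_pow_mul_exp_neg_sq (m : ℕ) :
    ∫ r in Ioi (0 : ℝ), r ^ m * exp (-r ^ 2) = Gamma ((m + 1) / 2) / 2 := by
  have h := integral_rpow_mul_exp_neg_rpow (p := 2) (q := m) two_pos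
    (neg_one_lt_zero.trans_le m.cast_nonneg)
  rw [one_div_mul_eq_div] at h
  rw [← h]
  refine setIntegral_congr_fun measurableSet_Ioi fun r _ => ?_
  rw [rpow_natCast, rpow_two]

theorem integral_exp_neg_sq : ∫ s : ℝ, exp (-s ^ 2) = √π := by
  simpa using integral_gaussian 1

theorem integral_pow_two_mul_mul_exp_neg_sq (k : ℕ) :
    ∫ s : ℝ, s ^ (2 * k) * exp (-s ^ 2) = Gamma ((2 * k + 1) / 2) := by
  have h := integral_comp_abs (f := fun r => r ^ (2 * k) * exp (-r ^ 2))
  simp only [(even_two_mul k).pow_abs, sq_abs] at h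
  rw [h, integral_Ioi_pow_mul_exp_neg_sq]
  push_cast
  ring

theorem EuclideanSpace.integral_pow_mul_exp_neg_norm_sq {ι : Type*} [Fintype ι] (i : ι)
    (m : ℕ) :
    ∫ x : EuclideanSpace ℝ ι, x i ^ m * exp (-‖x‖ ^ 2) =
      (∫ s : ℝ, s ^ m * exp (-s ^ 2)) * √π ^ (Fintype.card ι - 1) := by
  classical
  have hprod (y : ι → ℝ) : (WithLp.toLp 2 y) i ^ m * exp (-‖WithLp.toLp 2 y‖ ^ 2) =
      ∏ j, (if j = i then y j ^ m else 1) * exp (-y j ^ 2) := by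
    rw [Finset.prod_mul_distrib, Finset.prod_ite_eq', EuclideanSpace.norm_sq_eq, ← exp_sum]
    simp
  rw [← (PiLp.volume_preserving_toLp ι).integral_comp
    (MeasurableEquiv.toLp 2 (ι → ℝ)).measurableEmbedding]
  simp_rw [hprod]
  rw [integral_fintype_prod_volume_eq_prod fun j s => (if j = i then s ^ m else 1) * exp (-s ^ 2),
    Fintype.prod_eq_mul_prod_compl i]
  simp only [↓reduceIte]
  rw [Finset.prod_congr rfl fun j hj => ?_, Finset.prod_const, Finset.card_compl,
    Finset.card_singleton]
  simp only [if_neg (Finset.notMem_singleton.mp (Finset.mem_compl.mp hj)), one_mul,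
    integral_exp_neg_sq]

theorem integral_volumeIoiPow (n : ℕ) (k : ℝ → ℝ) :
    ∫ r, k r ∂Measure.volumeIoiPow n = ∫ r in Ioi (0 : ℝ), r ^ n * k r := by
  simp only [Measure.volumeIoiPow, ENNReal.ofReal]
  rw [integral_withDensity_eq_integral_smul
      ((measurable_subtype_coe.pow_const _).real_toNNReal),
    integral_subtype_comap measurableSet_Ioi fun r => (r ^ n).toNNReal • k r]
  refine setIntegral_congr_fun measurableSet_Ioi fun r hr => ?_
  rw [NNReal.smul_def, Real.coe_toNNReal _ (pow_nonneg (le_of_lt hr) _), smul_eq_mul]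

theorem integral_eq_integral_toSphere_mul_integral_Ioi {E : Type*} [NormedAddCommGroup E]
    [NormedSpace ℝ E] [FiniteDimensional ℝ E] [MeasurableSpace E] [BorelSpace E] [Nontrivial E]
    (μ : Measure E) [μ.IsAddHaarMeasure] {H : E → ℝ} (g : sphere (0 : E) 1 → ℝ) (k : ℝ → ℝ)
    (hH : ∀ (ξ : sphere (0 : E) 1) (r : ℝ), 0 < r → H (r • (ξ : E)) = g ξ * k r) :
    ∫ w, H w ∂μ =
      (∫ ξ, g ξ ∂μ.toSphere) * ∫ r in Ioi (0 : ℝ), r ^ (Module.finrank ℝ E - 1) * k r := by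
  set e := homeomorphUnitSphereProd E
  have hH' (w : ({0}ᶜ : Set E)) : g (e w).1 * k (e w).2 = H w := by
    rw [← hH _ _ (e w).2.2, ← homeomorphUnitSphereProd_symm_apply_coe,
      Homeomorph.symm_apply_apply]
  calc ∫ w, H w ∂μ = ∫ w : ({0}ᶜ : Set E), H w ∂μ.comap Subtype.val := by
        rw [integral_subtype_comap (measurableSet_singleton 0).compl, restrict_compl_singleton]
    _ = ∫ p, g p.1 * k p.2 ∂μ.toSphere.prod (Measure.volumeIoiPow (Module.finrank ℝ E - 1)) := by
        simp_rw [← hH']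
        exact μ.measurePreserving_homeomorphUnitSphereProd.integral_comp
          (Homeomorph.measurableEmbedding _) fun p => g p.1 * k p.2
    _ = _ := by rw [integral_prod_mul g fun r : Ioi (0 : ℝ) => k r, integral_volumeIoiPow]

section InnerProductSpace

variable {E : Type*} [NormedAddCommGroup E] [InnerProductSpace ℝ E] [FiniteDimensional ℝ E]
  [MeasurableSpace E] [BorelSpace E]

theorem integral_inner_pow_mul_exp_neg_norm_sq {u : E} (hu : ‖u‖ = 1) (m : ℕ) :
    ∫ w, ⟪w, u⟫ ^ m * exp (-‖w‖ ^ 2) =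
      (∫ s : ℝ, s ^ m * exp (-s ^ 2)) * √π ^ (Module.finrank ℝ E - 1) := by
  have : Nontrivial E := nontrivial_of_ne u 0 (by rintro rfl; simp at hu)
  let i₀ : Fin (Module.finrank ℝ E) := ⟨0, Module.finrank_pos⟩
  obtain ⟨b, hb⟩ := Orthonormal.exists_orthonormalBasis_extension_of_card_eq
    (Fintype.card_fin _).symm (v := fun _ => u) (s := {i₀})
    (orthonormal_subsingleton_iff.mpr fun _ => hu)
  have hcoord (x : EuclideanSpace ℝ (Fin (Module.finrank ℝ E))) :
      ⟪b.repr.symm x, u⟫ = x i₀ := by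
    rw [← hb i₀ rfl, real_inner_comm, ← b.repr_apply_apply, LinearIsometryEquiv.apply_symm_apply]
  rw [← b.measurePreserving_repr_symm.integral_comp b.repr.symm.toHomeomorph.measurableEmbedding]
  simp only [hcoord, LinearIsometryEquiv.norm_map]
  rw [EuclideanSpace.integral_pow_mul_exp_neg_norm_sq, Fintype.card_fin]

theorem integral_inner_pow_toSphere_mul_Gamma {u : E} (hu : ‖u‖ = 1) (m : ℕ) :
    (∫ ξ, ⟪(ξ : E), u⟫ ^ m ∂(volume : Measure E).toSphere) *
        (Gamma ((m + Module.finrank ℝ E) / 2) / 2) =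
      (∫ s : ℝ, s ^ m * exp (-s ^ 2)) * √π ^ (Module.finrank ℝ E - 1) := by
  have : Nontrivial E := nontrivial_of_ne u 0 (by rintro rfl; simp at hu)
  have hdim : 0 < Module.finrank ℝ E := Module.finrank_pos
  rw [← integral_inner_pow_mul_exp_neg_norm_sq hu, integral_eq_integral_toSphere_mul_integral_Ioi
    volume (fun ξ => ⟪(ξ : E), u⟫ ^ m) (fun r => r ^ m * exp (-r ^ 2)) fun ξ r hr => ?_]
  · simp_rw [← mul_assoc, ← pow_add]
    rw [integral_Ioi_pow_mul_exp_neg_sq]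
    congr 3
    push_cast [Nat.cast_sub hdim]
    ring
  · rw [real_inner_smul_left, norm_smul, norm_eq_of_mem_sphere, norm_of_nonneg hr.le, mul_one,
      mul_pow]
    ring

end InnerProductSpace

theorem exists_norm_eq_one_smul_eq {E : Type*} [NormedAddCommGroup E] [NormedSpace ℝ E]
    [Nontrivial E] (z : E) : ∃ u : E, ‖u‖ = 1 ∧ ‖z‖ • u = z := by
  rcases eq_or_ne z 0 with rfl | hz
  · obtain ⟨u, hu⟩ := exists_norm_eq E zero_le_one
    exact ⟨u, hu, by simp⟩
  · exact ⟨‖z‖⁻¹ • z, norm_smul_inv_norm hz, smul_inv_smul₀ (norm_ne_zero_iff.mpr hz) z⟩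

theorem EuclideanSpace.nontrivial_of_pos {d : ℕ} (hd : 0 < d) :
    Nontrivial (EuclideanSpace ℝ (Fin d)) :=
  Module.nontrivial_of_finrank_pos (R := ℝ) (by rwa [finrank_euclideanSpace_fin])

theorem isProbabilityMeasure_uniformSphere {d : ℕ} (hd : 0 < d) :
    IsProbabilityMeasure (uniformSphere d) := by
  have := EuclideanSpace.nontrivial_of_pos hd
  constructor
  rw [uniformSphere, Measure.smul_apply, smul_eq_mul, ENNReal.inv_mul_cancel
    (Measure.measure_univ_ne_zero.mpr (Measure.toSphere_ne_zero _)) (measure_ne_top _ _)]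

noncomputable def sphereEvenMoment (d n : ℕ) : ℝ :=
  Gamma ((2 * n + 1) / 2) * Gamma (d / 2) / (√π * Gamma ((2 * n + d) / 2))

theorem integral_inner_pow_uniformSphere {d : ℕ} (hd : 0 < d) (k : ℕ)
    (z : EuclideanSpace ℝ (Fin d)) :
    ∫ ξ, ⟪(ξ : EuclideanSpace ℝ (Fin d)), z⟫ ^ (2 * k) ∂uniformSphere d =
      sphereEvenMoment d k * ‖z‖ ^ (2 * k) := by
  have := EuclideanSpace.nontrivial_of_pos hd
  obtain ⟨u, hu, hzu⟩ := exists_norm_eq_one_smul_eq z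
  have hmoment := integral_inner_pow_toSphere_mul_Gamma hu (2 * k)
  have hmass := integral_inner_pow_toSphere_mul_Gamma hu 0
  simp only [pow_zero, integral_const, smul_eq_mul, mul_one, one_mul, Nat.cast_zero, zero_add,
    integral_exp_neg_sq] at hmass
  rw [integral_pow_two_mul_mul_exp_neg_sq] at hmoment
  rw [finrank_euclideanSpace_fin] at hmoment hmass
  push_cast at hmoment
  have hΓ₁ : Gamma ((2 * k + d) / 2) ≠ 0 := (Gamma_pos_of_pos (by positivity)).ne'
  have hΓ₂ : Gamma (d / 2) ≠ 0 := (Gamma_pos_of_pos (by positivity)).ne'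
  rw [uniformSphere, integral_smul_measure, ENNReal.toReal_inv, ← measureReal_def, ← hzu]
  simp_rw [real_inner_smul_right, mul_pow]
  rw [integral_const_mul, norm_smul, hu, norm_norm, mul_one, smul_eq_mul,
    eq_div_of_mul_eq (div_ne_zero hΓ₂ two_ne_zero) hmass,
    eq_div_of_mul_eq (div_ne_zero hΓ₁ two_ne_zero) hmoment, sphereEvenMoment]
  field_simp

noncomputable def gaussianSliceCoeff (d : ℕ) (σ : ℝ) (n : ℕ) : ℝ :=
  (-1) ^ n * √π * Gamma ((2 * n + d) / 2) /
    (2 ^ n * σ ^ (2 * n) * n.factorial * Gamma (d / 2) * Gamma ((2 * n + 1) / 2))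

theorem gaussianSliceCoeff_mul_sphereEvenMoment {d : ℕ} (hd : 0 < d) (σ : ℝ) (n : ℕ) :
    gaussianSliceCoeff d σ n * sphereEvenMoment d n = (-(2 * σ ^ 2)⁻¹) ^ n / n.factorial := by
  have hpow : (-(2 * σ ^ 2)⁻¹) ^ n = (-1) ^ n / (2 ^ n * σ ^ (2 * n)) := by
    rw [neg_eq_neg_one_mul, mul_pow, inv_pow, mul_pow, ← pow_mul, div_eq_mul_inv]
  rw [gaussianSliceCoeff, sphereEvenMoment, hpow]
  field_simp

theorem integral_norm_const_mul_of_nonneg {α : Type*} [MeasurableSpace α] (μ : Measure α)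
    (c : ℝ) {g : α → ℝ} (hg : 0 ≤ g) : ∫ a, ‖c * g a‖ ∂μ = ‖∫ a, c * g a ∂μ‖ := by
  simp_rw [norm_mul, norm_of_nonneg (hg _)]
  rw [integral_const_mul, integral_const_mul, norm_mul, norm_of_nonneg (integral_nonneg hg)]

theorem gaussian_kernel_sliced_general (d : ℕ) (hd : 2 ≤ d) (σ : ℝ)
    (f : ℝ → ℝ)
    (hf : ∀ x : ℝ, f x = ∑' n : ℕ,
      ((-1 : ℝ) ^ n * Real.sqrt Real.pi * Real.Gamma ((2 * (n : ℝ) + d) / 2) /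
          (2 ^ n * σ ^ (2 * n) * (n.factorial : ℝ) * Real.Gamma ((d : ℝ) / 2) *
            Real.Gamma ((2 * (n : ℝ) + 1) / 2))) * x ^ (2 * n))
    (x y : EuclideanSpace ℝ (Fin d)) :
    (∫ ξ : sphere (0 : EuclideanSpace ℝ (Fin d)) 1,
        f ⟪(ξ : EuclideanSpace ℝ (Fin d)), x - y⟫ ∂(uniformSphere d))
      = Real.exp (-‖x - y‖ ^ 2 / (2 * σ ^ 2)) := by
  have hd₀ : 0 < d := by omega
  have := isProbabilityMeasure_uniformSphere hd₀
  set z := x - y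
  set F : ℕ → sphere (0 : EuclideanSpace ℝ (Fin d)) 1 → ℝ :=
    fun n ξ => gaussianSliceCoeff d σ n * ⟪(ξ : EuclideanSpace ℝ (Fin d)), z⟫ ^ (2 * n)
  have hF (n : ℕ) : ∫ ξ, F n ξ ∂uniformSphere d = (-‖z‖ ^ 2 / (2 * σ ^ 2)) ^ n / n.factorial := by
    rw [integral_const_mul, integral_inner_pow_uniformSphere hd₀, ← mul_assoc,
      gaussianSliceCoeff_mul_sphereEvenMoment hd₀]
    ring
  have hF_int (n : ℕ) : Integrable (F n) (uniformSphere d) :=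
    (by fun_prop : Continuous (F n)).integrable_of_hasCompactSupport
      (HasCompactSupport.of_compactSpace _)
  -- each term has constant sign, so absolute summability is that of the exponential series
  have hF_norm (n : ℕ) : ∫ ξ, ‖F n ξ‖ ∂uniformSphere d = ‖∫ ξ, F n ξ ∂uniformSphere d‖ :=
    integral_norm_const_mul_of_nonneg _ _ fun ξ => (even_two_mul n).pow_nonneg _
  calc ∫ ξ, f ⟪(ξ : EuclideanSpace ℝ (Fin d)), z⟫ ∂uniformSphere d
      = ∫ ξ, ∑' n, F n ξ ∂uniformSphere d := integral_congr_ae (.of_forall fun ξ => hf _)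
    _ = ∑' n, ∫ ξ, F n ξ ∂uniformSphere d := by
        refine (integral_tsum_of_summable_integral_norm hF_int ?_).symm
        simpa only [hF_norm, hF] using (Real.summable_pow_div_factorial _).norm
    _ = _ := by simp only [hF, exp_eq_exp_ℝ, NormedSpace.exp_eq_tsum_div]

/-- The `d`-dimensional Gaussian kernel `exp(-‖x-y‖²/(2σ²))` is the sliced version of the
one-dimensional kernel given by the confluent hypergeometric function
`f_σ(x) = ₁F₁(d/2; 1/2; -x²/(2σ²))` (given here by its globally convergent power
series). -/
theorem gaussian_kernel_sliced (d : ℕ) (hd : 2 ≤ d) (σ : ℝ) (hσ : 0 < σ)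
    (f : ℝ → ℝ)
    (hf : ∀ x : ℝ, f x = ∑' n : ℕ,
      ((-1 : ℝ) ^ n * Real.sqrt Real.pi * Real.Gamma ((2 * (n : ℝ) + d) / 2) /
          (2 ^ n * σ ^ (2 * n) * (n.factorial : ℝ) * Real.Gamma ((d : ℝ) / 2) *
            Real.Gamma ((2 * (n : ℝ) + 1) / 2))) * x ^ (2 * n))
    (x y : EuclideanSpace ℝ (Fin d)) :
    (∫ ξ : sphere (0 : EuclideanSpace ℝ (Fin d)) 1,
        f ⟪(ξ : EuclideanSpace ℝ (Fin d)), x - y⟫ ∂(uniformSphere d))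
      = Real.exp (-‖x - y‖ ^ 2 / (2 * σ ^ 2)) :=
  gaussian_kernel_sliced_general d hd σ f hf x y
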